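/- For ψ, φ₁, φ₂ ∈ ℝ define the unit beamforming vector v(ψ, φ₁, φ₂) = (cos ψ · e^{iφ₁}, sin ψ · e^{iφ₂}) ∈ ℂ². Then for any angles ψ, ψ′, φ₁, φ₁′, φ₂, φ₂′ ∈ ℝ, ‖v(ψ, φ₁, φ₂) − v(ψ′, φ₁′, φ₂′)‖² ≤ 8·( sin²((ψ − ψ′)/2) + sin²((φ₁ − φ₁′)/2) + sin²((φ₂ − φ₂′)/2) ). -/

import Mathlib

/-! Each coordinate `c e^{ia} - c' e^{ia'}` splits into an amplitude change `(c - c') e^{ia}` and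
a phase change `c' (e^{ia} - e^{ia'})`, whose chord length is `2 |sin ((a - a') / 2)|`.
Squaring costs a factor `2`, and the amplitude changes `(cos ψ - cos ψ')² + (sin ψ - sin ψ')²`
add up to the chord length `4 sin² ((ψ - ψ') / 2)` of `ψ` itself. -/

open Real Complex

/-- The IEEE 802.11 (`N_t = 2`, one spatial stream) beamforming vector reconstructed
from a Givens rotation angle `ψ` and per-antenna phase angles `φ₁, φ₂`:
`v(ψ, φ₁, φ₂) = (cos ψ · e^{iφ₁}, sin ψ · e^{iφ₂}) ∈ ℂ²`. -/
noncomputable def bfVec (ψ φ₁ φ₂ : ℝ) : EuclideanSpace ℂ (Fin 2) :=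
  WithLp.toLp 2 ![(Real.cos ψ : ℂ) * Complex.exp (φ₁ * Complex.I),
    (Real.sin ψ : ℂ) * Complex.exp (φ₂ * Complex.I)]

theorem Real.cos_sub_cos_sq_add_sin_sub_sin_sq (a b : ℝ) :
    (cos a - cos b) ^ 2 + (sin a - sin b) ^ 2 = 4 * sin ((a - b) / 2) ^ 2 := by
  rw [Real.cos_sub_cos, Real.sin_sub_sin]
  linear_combination 4 * sin ((a - b) / 2) ^ 2 * sin_sq_add_cos_sq ((a + b) / 2)

theorem Complex.sq_norm_exp_ofReal_mul_I_sub (a b : ℝ) :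
    ‖exp (a * I) - exp (b * I)‖ ^ 2 = 4 * Real.sin ((a - b) / 2) ^ 2 := by
  rw [← Real.cos_sub_cos_sq_add_sin_sub_sin_sq, Complex.sq_norm, normSq_apply]
  simp only [sub_re, sub_im, exp_ofReal_mul_I_re, exp_ofReal_mul_I_im]
  ring

theorem Complex.sq_norm_ofReal_mul_exp_sub_le (c c' a a' : ℝ) (hc' : |c'| ≤ 1) :
    ‖c * exp (a * I) - c' * exp (a' * I)‖ ^ 2 ≤
      2 * (c - c') ^ 2 + 8 * Real.sin ((a - a') / 2) ^ 2 := by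
  have htri : ‖c * exp (a * I) - c' * exp (a' * I)‖ ≤
      |c - c'| + ‖exp (a * I) - exp (a' * I)‖ :=
    calc ‖c * exp (a * I) - c' * exp (a' * I)‖
        = ‖((c - c' : ℝ) : ℂ) * exp (a * I) + c' * (exp (a * I) - exp (a' * I))‖ := by
          push_cast; ring_nf
      _ ≤ |c - c'| + |c'| * ‖exp (a * I) - exp (a' * I)‖ := by
          refine (norm_add_le _ _).trans_eq ?_
          rw [norm_mul, norm_mul, norm_exp_ofReal_mul_I, mul_one, norm_real, norm_real,
            Real.norm_eq_abs, Real.norm_eq_abs]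
      _ ≤ |c - c'| + ‖exp (a * I) - exp (a' * I)‖ := by
          gcongr
          exact mul_le_of_le_one_left (norm_nonneg _) hc'
  calc ‖c * exp (a * I) - c' * exp (a' * I)‖ ^ 2
      ≤ (|c - c'| + ‖exp (a * I) - exp (a' * I)‖) ^ 2 := by gcongr
    _ ≤ 2 * (|c - c'| ^ 2 + ‖exp (a * I) - exp (a' * I)‖ ^ 2) := add_sq_le
    _ = 2 * (c - c') ^ 2 + 8 * Real.sin ((a - a') / 2) ^ 2 := by
      rw [sq_abs, sq_norm_exp_ofReal_mul_I_sub]; ring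

theorem sq_norm_bfVec_sub (ψ ψ' φ₁ φ₁' φ₂ φ₂' : ℝ) :
    ‖bfVec ψ φ₁ φ₂ - bfVec ψ' φ₁' φ₂'‖ ^ 2 =
      ‖(Real.cos ψ : ℂ) * exp (φ₁ * I) - (Real.cos ψ' : ℂ) * exp (φ₁' * I)‖ ^ 2 +
        ‖(Real.sin ψ : ℂ) * exp (φ₂ * I) - (Real.sin ψ' : ℂ) * exp (φ₂' * I)‖ ^ 2 := by
  simp [EuclideanSpace.norm_sq_eq, bfVec, Fin.sum_univ_two]

theorem bfVec_dist_sq_le (ψ ψ' φ₁ φ₁' φ₂ φ₂' : ℝ) :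
    ‖bfVec ψ φ₁ φ₂ - bfVec ψ' φ₁' φ₂'‖ ^ 2 ≤
      8 * (Real.sin ((ψ - ψ') / 2) ^ 2 + Real.sin ((φ₁ - φ₁') / 2) ^ 2 +
        Real.sin ((φ₂ - φ₂') / 2) ^ 2) := by
  rw [sq_norm_bfVec_sub]
  have h₁ := sq_norm_ofReal_mul_exp_sub_le (Real.cos ψ) _ φ₁ φ₁' (abs_cos_le_one ψ')
  have h₂ := sq_norm_ofReal_mul_exp_sub_le (Real.sin ψ) _ φ₂ φ₂' (abs_sin_le_one ψ')
  have hψ := Real.cos_sub_cos_sq_add_sin_sub_sin_sq ψ ψ'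
  linarith
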